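/- Let X be a real Banach space whose complexification X ⊕_ℂ X is a primary complex Banach space. Then X admits at most one complex structure up to ℂ-linear isomorphism: for any two operators A, B on X with A² = B² = −Id, the complex spaces X^A and X^B are ℂ-linearly isomorphic. -/

import Mathlib

/-
If `A² = -1`, then `x ↦ (x, -Ax)` identifies `X^A` with the range of a projection `P` on the
complexification `(X × X, J)` commuting with `J`. The conjugation `(x, y) ↦ (x, -y)`
anticommutes with `J` and exchanges `P` with `1 - P`, so primariness, which splits one of
them, splits both: `(X × X)^J ≅ range P ≅ X^A`. Hence `X^A ≅ X^B`.
-/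

/-- A complex structure on a real Banach space `Y` given by an operator `J` with
`J² = -Id` is *primary* if for every continuous projection `P` commuting with `J`,
the space `Y^J` is `ℂ`-linearly isomorphic either to the range of `P` or to the
range of `1 - P` (such an isomorphism onto the range of a projection `R` commuting
with `J` is encoded by operators `T, S` commuting with `J` with `S ∘ T = Id`,
`T ∘ S = R`). -/
def IsPrimaryStructure {Y : Type*} [NormedAddCommGroup Y] [NormedSpace ℝ Y]
    (J : Y →L[ℝ] Y) : Prop :=
  ∀ P : Y →L[ℝ] Y, P * P = P → P * J = J * P →
    (∃ T S : Y →L[ℝ] Y, T * J = J * T ∧ S * J = J * S ∧ S * T = 1 ∧ T * S = P) ∨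
    (∃ T S : Y →L[ℝ] Y, T * J = J * T ∧ S * J = J * S ∧ S * T = 1 ∧ T * S = 1 - P)

open ContinuousLinearMap

section Ring

variable {R : Type*} [Ring R]

/-- The range of `Q` is `J`-equivariantly isomorphic to the whole space, via `T` with left
inverse `S`. -/
def IsSplitBy (J Q : R) : Prop :=
  ∃ T S : R, Commute T J ∧ Commute S J ∧ S * T = 1 ∧ T * S = Q

theorem Commute.conj_of_anticommute {σ J T : R} (hσJ : σ * J = -(J * σ))
    (h : Commute T J) : Commute (σ * T * σ) J :=
  calc σ * T * σ * J = -(σ * (T * J) * σ) := by rw [mul_assoc _ σ, hσJ]; noncomm_ring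
    _ = -(σ * J * (T * σ)) := by rw [h.eq]; noncomm_ring
    _ = J * (σ * T * σ) := by rw [hσJ]; noncomm_ring

theorem IsSplitBy.conj {σ J Q : R} (hσσ : σ * σ = 1) (hσJ : σ * J = -(J * σ))
    (h : IsSplitBy J Q) : IsSplitBy J (σ * Q * σ) := by
  obtain ⟨T, S, hTJ, hSJ, hST, hTS⟩ := h
  refine ⟨σ * T * σ, σ * S * σ, hTJ.conj_of_anticommute hσJ,
    hSJ.conj_of_anticommute hσJ, ?_, ?_⟩
  · calc σ * S * σ * (σ * T * σ) = σ * S * (σ * σ) * T * σ := by noncomm_ring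
      _ = 1 := by rw [hσσ, mul_one, mul_assoc σ S T, hST, mul_one, hσσ]
  · calc σ * T * σ * (σ * S * σ) = σ * T * (σ * σ) * S * σ := by noncomm_ring
      _ = σ * Q * σ := by rw [hσσ, mul_one, mul_assoc σ T S, hTS]

end Ring

section Primary

variable {X Y : Type*} [NormedAddCommGroup X] [NormedSpace ℝ X]
  [NormedAddCommGroup Y] [NormedSpace ℝ Y]

theorem IsPrimaryStructure.isSplitBy {J P σ : Y →L[ℝ] Y} (hJ : IsPrimaryStructure J)
    (hP : IsIdempotentElem P) (hPJ : Commute P J) (hσσ : σ * σ = 1)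
    (hσJ : σ * J = -(J * σ)) (hσP : σ * P * σ = 1 - P) : IsSplitBy J P := by
  rcases hJ P hP hPJ with h | h
  · exact h
  · have hσP' : σ * (1 - P) * σ = P := by
      rw [mul_sub, sub_mul, mul_one, hσσ, hσP, sub_sub_cancel]
    exact hσP' ▸ IsSplitBy.conj hσσ hσJ h

theorem exists_equiv_of_isSplitBy {A : X →L[ℝ] X} {J : Y →L[ℝ] Y} {u : X →L[ℝ] Y}
    {v : Y →L[ℝ] X} (hvu : v ∘L u = 1) (huA : u ∘L A = J ∘L u)
    (h : IsSplitBy J (u ∘L v)) :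
    ∃ e : X ≃L[ℝ] Y, (e : X →L[ℝ] Y) ∘L A = J ∘L e := by
  obtain ⟨T, S, -, hSJ, hST, hTS⟩ := h
  have hST' : S ∘L T = .id ℝ Y := hST
  have hTS' : T ∘L S = u ∘L v := hTS
  refine ⟨.equivOfInverse' (S ∘L u) (v ∘L T) ?_ ?_, ?_⟩
  · calc S ∘L u ∘L v ∘L T = S ∘L (T ∘L S) ∘L T := by simp only [hTS', comp_assoc]
      _ = .id ℝ Y := by simp only [← comp_assoc, hST', id_comp]
  · calc v ∘L T ∘L S ∘L u = v ∘L (u ∘L v) ∘L u := by simp only [← hTS', comp_assoc]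
      _ = .id ℝ X := by simp only [← comp_assoc, hvu, one_def, id_comp]
  · calc S ∘L u ∘L A = (S * J) ∘L u := by rw [huA]; rfl
      _ = J ∘L S ∘L u := by rw [hSJ.eq]; rfl

end Primary

section Complexification

variable {X : Type*} [NormedAddCommGroup X] [NormedSpace ℝ X]

variable (X) in
noncomputable def complexificationJ : (X × X) →L[ℝ] (X × X) :=
  (-(snd ℝ X X)).prod (fst ℝ X X)

variable (X) in
noncomputable def complexificationConj : (X × X) →L[ℝ] (X × X) :=
  (fst ℝ X X).prod (-(snd ℝ X X))

noncomputable def complexificationEmbed (A : X →L[ℝ] X) : X →L[ℝ] (X × X) :=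
  (ContinuousLinearMap.id ℝ X).prod (-A)

noncomputable def complexificationRetract (A : X →L[ℝ] X) : (X × X) →L[ℝ] X :=
  (2⁻¹ : ℝ) • (fst ℝ X X + A ∘L snd ℝ X X)

theorem complexificationConj_mul_self : complexificationConj X * complexificationConj X = 1 := by
  ext <;> simp [complexificationConj]

theorem complexificationConj_mul_J :
    complexificationConj X * complexificationJ X =
      -(complexificationJ X * complexificationConj X) := by
  ext <;> simp [complexificationConj, complexificationJ]

variable {A : X →L[ℝ] X}

theorem apply_apply_of_mul_self_eq_neg_one (hA : A * A = -1) (x : X) : A (A x) = -x := by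
  simpa using congr($hA x)

theorem complexificationRetract_comp_embed (hA : A * A = -1) :
    complexificationRetract A ∘L complexificationEmbed A = 1 := by
  ext x
  simp [complexificationRetract, complexificationEmbed, apply_apply_of_mul_self_eq_neg_one hA]
  module

theorem complexificationEmbed_comp (hA : A * A = -1) :
    complexificationEmbed A ∘L A = complexificationJ X ∘L complexificationEmbed A := by
  ext x <;> simp [complexificationJ, complexificationEmbed, apply_apply_of_mul_self_eq_neg_one hA]

theorem complexificationRetract_comp_J (hA : A * A = -1) :
    complexificationRetract A ∘L complexificationJ X = A ∘L complexificationRetract A := by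
  ext x <;> simp [complexificationJ, complexificationRetract, apply_apply_of_mul_self_eq_neg_one hA]

theorem complexificationConj_mul_embed_comp_retract_mul_conj (hA : A * A = -1) :
    complexificationConj X * (complexificationEmbed A ∘L complexificationRetract A) *
      complexificationConj X = 1 - complexificationEmbed A ∘L complexificationRetract A := by
  ext p <;> simp [complexificationConj, complexificationRetract, complexificationEmbed,
    apply_apply_of_mul_self_eq_neg_one hA] <;> module

theorem exists_equiv_complexification (hJ : IsPrimaryStructure (complexificationJ X))
    (hA : A * A = -1) :
    ∃ e : X ≃L[ℝ] X × X, (e : X →L[ℝ] X × X) ∘L A = complexificationJ X ∘L e := by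
  set u := complexificationEmbed A
  set v := complexificationRetract A
  have hvu : v ∘L u = 1 := complexificationRetract_comp_embed hA
  have huA : u ∘L A = complexificationJ X ∘L u := complexificationEmbed_comp hA
  have hvJ : v ∘L complexificationJ X = A ∘L v := complexificationRetract_comp_J hA
  have hP : IsIdempotentElem (u ∘L v) :=
    show u ∘L (v ∘L u) ∘L v = u ∘L v by rw [hvu]; rfl
  have hPJ : Commute (u ∘L v) (complexificationJ X) :=
    show u ∘L v ∘L complexificationJ X = complexificationJ X ∘L u ∘L v by
      rw [hvJ, ← comp_assoc, huA, comp_assoc]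
  exact exists_equiv_of_isSplitBy hvu huA <| hJ.isSplitBy hP hPJ complexificationConj_mul_self
    complexificationConj_mul_J (complexificationConj_mul_embed_comp_retract_mul_conj hA)

end Complexification

theorem stmt_14_general (X : Type*) [NormedAddCommGroup X] [NormedSpace ℝ X]
    (hprim : IsPrimaryStructure
      ((-(ContinuousLinearMap.snd ℝ X X)).prod (ContinuousLinearMap.fst ℝ X X)))
    (A B : X →L[ℝ] X) (hA : A * A = -1) (hB : B * B = -1) :
    ∃ T : X →L[ℝ] X, IsUnit T ∧ T * A = B * T := by
  obtain ⟨eA, heA⟩ := exists_equiv_complexification hprim hA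
  obtain ⟨eB, heB⟩ := exists_equiv_complexification hprim hB
  have heB' : (eB.symm : X × X →L[ℝ] X) ∘L complexificationJ X = B ∘L eB.symm := by
    refine ContinuousLinearMap.ext fun p => ?_
    simpa using congr(eB.symm ($heB (eB.symm p))).symm
  refine ⟨(eA.trans eB.symm).toUnit, Units.isUnit _, ?_⟩
  show (eB.symm : X × X →L[ℝ] X) ∘L (eA : X →L[ℝ] X × X) ∘L A =
    B ∘L (eB.symm : X × X →L[ℝ] X) ∘L (eA : X →L[ℝ] X × X)
  rw [heA, ← comp_assoc, heB', comp_assoc]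

/-- let `X` be a real Banach space whose complexification `X ⊕ X`
with the canonical complex structure `J(x,y) = (-y,x)` is primary. Then `X` admits
at most one complex structure up to `ℂ`-linear isomorphism: for any operators
`A, B` on `X` with `A² = B² = -Id`, the complex spaces `X^A` and `X^B` are
`ℂ`-linearly isomorphic (encoded by an invertible operator `T` with `TA = BT`). -/
theorem stmt_14 (X : Type*) [NormedAddCommGroup X] [NormedSpace ℝ X] [CompleteSpace X]
    (hprim : IsPrimaryStructure
      ((-(ContinuousLinearMap.snd ℝ X X)).prod (ContinuousLinearMap.fst ℝ X X)))
    (A B : X →L[ℝ] X) (hA : A * A = -1) (hB : B * B = -1) :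
    ∃ T : X →L[ℝ] X, IsUnit T ∧ T * A = B * T :=
  stmt_14_general X hprim A B hA hB
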